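/- arXiv:1909.06231 — 6 statements merged into one kernel-verified Lean document; each statement's English description precedes it below -/
import Mathlib

section
/- The diamond K_4 − e (the graph obtained from the complete graph on 4 vertices by deleting one edge) is not a contact B0-VPG graph. -/
/-- An axis-parallel nontrivial segment on the grid: `horiz` tells its direction,
`coord` is the fixed coordinate (the `y`-coordinate if horizontal, the `x`-coordinate
if vertical) and `[lo, hi]` (with `lo < hi`, i.e. the segment is nontrivial) is the
interval spanned by the varying coordinate. -/
structure GridSeg where
  horiz : Bool
  coord : ℤ
  lo : ℤ
  hi : ℤ
  lt : lo < hi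

namespace GridSeg

/-- The set of points (in the real plane) of a grid segment. -/
def pts (s : GridSeg) : Set (ℝ × ℝ) :=
  if s.horiz then {p | p.2 = (s.coord : ℝ) ∧ (s.lo : ℝ) ≤ p.1 ∧ p.1 ≤ (s.hi : ℝ)}
  else {p | p.1 = (s.coord : ℝ) ∧ (s.lo : ℝ) ≤ p.2 ∧ p.2 ≤ (s.hi : ℝ)}

/-- The interior of a grid segment. -/
def interior (s : GridSeg) : Set (ℝ × ℝ) :=
  if s.horiz then {p | p.2 = (s.coord : ℝ) ∧ (s.lo : ℝ) < p.1 ∧ p.1 < (s.hi : ℝ)}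
  else {p | p.1 = (s.coord : ℝ) ∧ (s.lo : ℝ) < p.2 ∧ p.2 < (s.hi : ℝ)}

/-- The two endpoints of a grid segment. -/
def ends (s : GridSeg) : Set (ℝ × ℝ) :=
  if s.horiz then {((s.lo : ℝ), (s.coord : ℝ)), ((s.hi : ℝ), (s.coord : ℝ))}
  else {((s.coord : ℝ), (s.lo : ℝ)), ((s.coord : ℝ), (s.hi : ℝ))}

/-- Two segments touch if they share a point which is an endpoint of at least
one of the two segments. -/
def Touch (s t : GridSeg) : Prop :=
  ∃ p : ℝ × ℝ, p ∈ s.pts ∧ p ∈ t.pts ∧ (p ∈ s.ends ∨ p ∈ t.ends)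

end GridSeg

/-- `f` is a contact B₀-VPG representation of `G`: the segments of distinct vertices are
interiorly disjoint, and two distinct vertices are adjacent iff their segments touch. -/
def IsB0Rep {V : Type*} (G : SimpleGraph V) (f : V → GridSeg) : Prop :=
  (∀ v w : V, v ≠ w → Disjoint (GridSeg.interior (f v)) (GridSeg.interior (f w))) ∧
  (∀ v w : V, v ≠ w → (G.Adj v w ↔ GridSeg.Touch (f v) (f w)))

/-- A graph is contact B₀-VPG if it admits a contact B₀-VPG representation. -/
def ContactB0VPG {V : Type*} (G : SimpleGraph V) : Prop :=
  ∃ f : V → GridSeg, IsB0Rep G f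

/-- The diamond `K₄ − e`: the complete graph on four vertices minus the edge `{2, 3}`. -/
def diamond : SimpleGraph (Fin 4) where
  Adj a b := a ≠ b ∧ ¬(a = 2 ∧ b = 3) ∧ ¬(a = 3 ∧ b = 2)
  symm := by
    constructor
    rintro a b ⟨h1, h2, h3⟩
    exact ⟨h1.symm, fun ⟨x, y⟩ => h3 ⟨y, x⟩, fun ⟨x, y⟩ => h2 ⟨y, x⟩⟩
  loopless := by
    constructor
    rintro a ⟨h, -, -⟩
    exact h rfl

/-!
Two parallel segments that touch are collinear and meet end to end, and three collinear segments
with disjoint interiors cannot pairwise touch. Hence in a triangle of a contact representation one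
segment crosses the common line of the other two, which it meets only once, so all three pass
through one point. Touching segments meet in a single point, so the triangles `012` and `013` of
the diamond both pass through the point where `0` and `1` meet. Segments `2` and `3` therefore
share a point, which, their interiors being disjoint, is an endpoint of one of them: they touch,
although `2` and `3` are not adjacent.
-/

namespace GridSeg

variable {s t u : GridSeg} {p q : ℝ × ℝ}

def along (s : GridSeg) (p : ℝ × ℝ) : ℝ := if s.horiz then p.1 else p.2

def across (s : GridSeg) (p : ℝ × ℝ) : ℝ := if s.horiz then p.2 else p.1

lemma mem_pts : p ∈ s.pts ↔ s.across p = s.coord ∧ (s.lo : ℝ) ≤ s.along p ∧ s.along p ≤ s.hi := by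
  unfold pts along across; cases s.horiz <;> rfl

lemma mem_interior :
    p ∈ s.interior ↔ s.across p = s.coord ∧ (s.lo : ℝ) < s.along p ∧ s.along p < s.hi := by
  unfold interior along across; cases s.horiz <;> rfl

lemma mem_ends : p ∈ s.ends ↔ s.across p = s.coord ∧ (s.along p = s.lo ∨ s.along p = s.hi) := by
  unfold ends along across; cases s.horiz <;> simp [Prod.ext_iff] <;> tauto

lemma ext_along_across (s : GridSeg) (h₁ : s.along p = s.along q) (h₂ : s.across p = s.across q) :
    p = q := by
  unfold along at h₁; unfold across at h₂
  split_ifs at h₁ h₂ <;> exact Prod.ext ‹_› ‹_›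

lemma exists_along_across (s : GridSeg) (x y : ℝ) : ∃ p, s.along p = x ∧ s.across p = y := by
  unfold along across; cases s.horiz
  exacts [⟨(y, x), rfl, rfl⟩, ⟨(x, y), rfl, rfl⟩]

lemma along_eq_of_horiz_eq (h : s.horiz = t.horiz) : s.along = t.along := by
  unfold along; rw [h]

lemma across_eq_of_horiz_eq (h : s.horiz = t.horiz) : s.across = t.across := by
  unfold across; rw [h]

lemma along_eq_across_of_horiz_ne (h : s.horiz ≠ t.horiz) : s.along = t.across := by
  unfold along across; cases hs : s.horiz <;> cases ht : t.horiz <;> simp_all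

lemma Touch.symm (h : s.Touch t) : t.Touch s :=
  let ⟨p, hs, ht, he⟩ := h; ⟨p, ht, hs, he.symm⟩

lemma touch_of_mem_pts (hd : Disjoint s.interior t.interior) (hs : p ∈ s.pts) (ht : p ∈ t.pts) :
    s.Touch t := by
  refine ⟨p, hs, ht, ?_⟩
  by_contra! hne
  have interior_of_not_mem_ends {r : GridSeg} (hr : p ∈ r.pts) (hne : p ∉ r.ends) :
      p ∈ r.interior := by
    rw [mem_pts] at hr; rw [mem_ends] at hne; rw [mem_interior]
    exact ⟨hr.1, lt_of_le_of_ne hr.2.1 fun h => hne ⟨hr.1, .inl h.symm⟩,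
      lt_of_le_of_ne hr.2.2 fun h => hne ⟨hr.1, .inr h⟩⟩
  exact Set.disjoint_left.1 hd (interior_of_not_mem_ends hs hne.1)
    (interior_of_not_mem_ends ht hne.2)

lemma overlap_of_horiz_eq (hb : s.horiz = t.horiz) (hs : p ∈ s.pts) (ht : p ∈ t.pts) :
    s.coord = t.coord ∧ s.lo ≤ t.hi ∧ t.lo ≤ s.hi := by
  rw [mem_pts] at hs ht
  rw [along_eq_of_horiz_eq hb, across_eq_of_horiz_eq hb] at hs
  refine ⟨?_, ?_, ?_⟩
  · exact_mod_cast hs.1.symm.trans ht.1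
  · exact_mod_cast hs.2.1.trans ht.2.2
  · exact_mod_cast ht.2.1.trans hs.2.2

lemma hi_le_lo_or_hi_le_lo (hb : s.horiz = t.horiz) (hc : s.coord = t.coord)
    (hd : Disjoint s.interior t.interior) : s.hi ≤ t.lo ∨ t.hi ≤ s.lo := by
  by_contra! h
  have hs := s.lt
  have ht := t.lt
  set m := max s.lo t.lo
  set M := min s.hi t.hi
  have hm : (m : ℝ) + 1 ≤ M := by exact_mod_cast (show m + 1 ≤ M by omega)
  obtain ⟨p, hpa, hpc⟩ := s.exists_along_across (m + 1 / 2) s.coord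
  have hp {r : GridSeg} (hlo : r.lo ≤ m) (hhi : M ≤ r.hi) (hr : r.along p = s.along p)
      (hrc : r.across p = r.coord) : p ∈ r.interior := by
    have := Int.cast_le (R := ℝ).2 hlo
    have := Int.cast_le (R := ℝ).2 hhi
    rw [mem_interior, hr, hpa]
    exact ⟨hrc, by linarith, by linarith⟩
  refine Set.disjoint_left.1 hd (hp (le_max_left _ _) (min_le_left _ _) rfl hpc)
    (hp (le_max_right _ _) (min_le_right _ _) (congrFun (along_eq_of_horiz_eq hb).symm p) ?_)
  rw [← across_eq_of_horiz_eq hb, hpc, hc]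

lemma eq_of_mem_pts (hd : Disjoint s.interior t.interior) (hps : p ∈ s.pts) (hpt : p ∈ t.pts)
    (hqs : q ∈ s.pts) (hqt : q ∈ t.pts) : p = q := by
  rw [mem_pts] at hps hqs
  refine s.ext_along_across ?_ (hps.1.trans hqs.1.symm)
  by_cases hb : s.horiz = t.horiz
  · obtain ⟨hc, -⟩ := overlap_of_horiz_eq hb (mem_pts.2 hps) hpt
    rw [mem_pts, ← along_eq_of_horiz_eq hb] at hpt hqt
    rcases hi_le_lo_or_hi_le_lo hb hc hd with h | h <;>
    · have : _ ≤ _ := Int.cast_le (R := ℝ).2 h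
      linarith
  · rw [mem_pts, ← along_eq_across_of_horiz_ne hb] at hpt hqt
    exact hpt.1.trans hqt.1.symm

lemma exists_common_of_horiz_eq (hst : Disjoint s.interior t.interior)
    (hsu : Disjoint s.interior u.interior) (htu : Disjoint t.interior u.interior)
    (hb : s.horiz = t.horiz) (st : s.Touch t) (su : s.Touch u) (tu : t.Touch u) :
    ∃ p, p ∈ s.pts ∧ p ∈ t.pts ∧ p ∈ u.pts := by
  obtain ⟨p, ps, pt, -⟩ := st
  obtain ⟨q, qs, qu, -⟩ := su
  obtain ⟨r, rt, ru, -⟩ := tu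
  obtain ⟨hc, ost⟩ := overlap_of_horiz_eq hb ps pt
  by_cases hu : s.horiz = u.horiz
  · exfalso
    obtain ⟨hc', osu⟩ := overlap_of_horiz_eq hu qs qu
    obtain ⟨-, otu⟩ := overlap_of_horiz_eq (hb ▸ hu) rt ru
    have := hi_le_lo_or_hi_le_lo hb hc hst
    have := hi_le_lo_or_hi_le_lo hu hc' hsu
    have := hi_le_lo_or_hi_le_lo (hb ▸ hu) (hc ▸ hc') htu
    have := s.lt; have := t.lt; have := u.lt
    omega
  · refine ⟨q, qs, ?_, qu⟩
    suffices q = r from this ▸ rt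
    rw [mem_pts] at qs qu rt ru
    rw [← along_eq_across_of_horiz_ne hu] at qu ru
    rw [← across_eq_of_horiz_eq hb] at rt
    exact s.ext_along_across (qu.1.trans ru.1.symm) (by rw [qs.1, rt.1, hc])

lemma exists_common (hst : Disjoint s.interior t.interior)
    (hsu : Disjoint s.interior u.interior) (htu : Disjoint t.interior u.interior)
    (st : s.Touch t) (su : s.Touch u) (tu : t.Touch u) :
    ∃ p, p ∈ s.pts ∧ p ∈ t.pts ∧ p ∈ u.pts := by
  rcases (by cases s.horiz <;> cases t.horiz <;> cases u.horiz <;> decide :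
      s.horiz = t.horiz ∨ s.horiz = u.horiz ∨ t.horiz = u.horiz) with h | h | h
  · exact exists_common_of_horiz_eq hst hsu htu h st su tu
  · obtain ⟨p, hs, hu, ht⟩ := exists_common_of_horiz_eq hsu hst htu.symm h su st tu.symm
    exact ⟨p, hs, ht, hu⟩
  · obtain ⟨p, ht, hu, hs⟩ := exists_common_of_horiz_eq htu hst.symm hsu.symm h tu st.symm su.symm
    exact ⟨p, hs, ht, hu⟩

end GridSeg

open GridSeg

/-- The diamond `K₄ − e` is not a contact B₀-VPG graph. -/
theorem diamond_not_contactB0VPG : ¬ ContactB0VPG diamond := by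
  rintro ⟨f, hdisj, hadj⟩
  have touch (v w : Fin 4) (h : diamond.Adj v w) : (f v).Touch (f w) := (hadj v w h.1).1 h
  have e01 := touch 0 1 ⟨by decide, by decide, by decide⟩
  have e02 := touch 0 2 ⟨by decide, by decide, by decide⟩
  have e03 := touch 0 3 ⟨by decide, by decide, by decide⟩
  have e12 := touch 1 2 ⟨by decide, by decide, by decide⟩
  have e13 := touch 1 3 ⟨by decide, by decide, by decide⟩
  have n23 : ¬ (f 2).Touch (f 3) := fun h => ((hadj 2 3 (by decide)).2 h).2.1 ⟨rfl, rfl⟩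
  have d01 := hdisj 0 1 (by decide)
  obtain ⟨p, p0, p1, p2⟩ :=
    exists_common d01 (hdisj 0 2 (by decide)) (hdisj 1 2 (by decide)) e01 e02 e12
  obtain ⟨q, q0, q1, q3⟩ :=
    exists_common d01 (hdisj 0 3 (by decide)) (hdisj 1 3 (by decide)) e01 e03 e13
  have hpq : p = q := eq_of_mem_pts d01 p0 p1 q0 q1
  exact n23 (touch_of_mem_pts (hdisj 2 3 (by decide)) p2 (hpq ▸ q3))
end

section
/- The complete graph K_5 on five vertices is not a contact B0-VPG graph. -/
namespace GridSeg

lemma touch_same_dir {s t : GridSeg} (hdir : s.horiz = t.horiz) (h : Touch s t) :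
    s.coord = t.coord ∧ s.lo ≤ t.hi ∧ t.lo ≤ s.hi := by
  obtain ⟨p, hs, ht, -⟩ := h
  cases hb : s.horiz <;>
    have hbt : t.horiz = s.horiz := hdir.symm <;>
    rw [hb] at hbt <;>
    simp only [pts, hb, hbt, if_true, if_false, Bool.false_eq_true,
      Set.mem_setOf_eq] at hs ht <;>
    · obtain ⟨h1, h2, h3⟩ := hs
      obtain ⟨h4, h5, h6⟩ := ht
      refine ⟨?_, ?_, ?_⟩
      · exact_mod_cast h1.symm.trans h4
      · exact_mod_cast h2.trans h6
      · exact_mod_cast h5.trans h3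

lemma disjoint_same_line {s t : GridSeg} (hdir : s.horiz = t.horiz)
    (hc : s.coord = t.coord)
    (hd : Disjoint s.interior t.interior) :
    s.hi ≤ t.lo ∨ t.hi ≤ s.lo := by
  by_contra hcon
  push_neg at hcon
  obtain ⟨h1, h2⟩ := hcon
  have hq : (max s.lo t.lo : ℤ) < min s.hi t.hi := by
    have := s.lt; have := t.lt; omega
  set m : ℝ := ((max s.lo t.lo : ℤ) + (min s.hi t.hi : ℤ)) / 2 with hm
  have hmlo : ((max s.lo t.lo : ℤ) : ℝ) < m := by
    rw [hm]; have : ((max s.lo t.lo : ℤ) : ℝ) < ((min s.hi t.hi : ℤ) : ℝ) := by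
      exact_mod_cast hq
    linarith
  have hmhi : m < ((min s.hi t.hi : ℤ) : ℝ) := by
    rw [hm]; have : ((max s.lo t.lo : ℤ) : ℝ) < ((min s.hi t.hi : ℤ) : ℝ) := by
      exact_mod_cast hq
    linarith
  have hslo : (s.lo : ℝ) < m := lt_of_le_of_lt (by exact_mod_cast le_max_left _ _) hmlo
  have htlo : (t.lo : ℝ) < m := lt_of_le_of_lt (by exact_mod_cast le_max_right _ _) hmlo
  have hshi : m < (s.hi : ℝ) := lt_of_lt_of_le hmhi (by exact_mod_cast min_le_left _ _)
  have hthi : m < (t.hi : ℝ) := lt_of_lt_of_le hmhi (by exact_mod_cast min_le_right _ _)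
  have hbt : t.horiz = s.horiz := hdir.symm
  cases hb : s.horiz with
  | true =>
      rw [hb] at hbt
      have hin1 : (m, (s.coord : ℝ)) ∈ s.interior := by
        simp only [interior, hb, if_true]; exact ⟨rfl, hslo, hshi⟩
      have hin2 : (m, (s.coord : ℝ)) ∈ t.interior := by
        simp only [interior, hbt, if_true]; exact ⟨by rw [hc], htlo, hthi⟩
      exact Set.disjoint_left.mp hd hin1 hin2
  | false =>
      rw [hb] at hbt
      have hin1 : ((s.coord : ℝ), m) ∈ s.interior := by
        simp only [interior, hb, Bool.false_eq_true, if_false]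
        exact ⟨rfl, hslo, hshi⟩
      have hin2 : ((s.coord : ℝ), m) ∈ t.interior := by
        simp only [interior, hbt, Bool.false_eq_true, if_false]
        exact ⟨by rw [hc], htlo, hthi⟩
      exact Set.disjoint_left.mp hd hin1 hin2

lemma three_impossible {s t u : GridSeg}
    (h1 : s.horiz = t.horiz) (h2 : t.horiz = u.horiz)
    (tst : Touch s t) (tsu : Touch s u) (ttu : Touch t u)
    (dst : Disjoint s.interior t.interior)
    (dsu : Disjoint s.interior u.interior)
    (dtu : Disjoint t.interior u.interior) : False := by
  obtain ⟨cst, ast, bst⟩ := touch_same_dir h1 tst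
  obtain ⟨csu, asu, bsu⟩ := touch_same_dir (h1.trans h2) tsu
  obtain ⟨ctu, atu, btu⟩ := touch_same_dir h2 ttu
  have e1 := disjoint_same_line h1 cst dst
  have e2 := disjoint_same_line (h1.trans h2) csu dsu
  have e3 := disjoint_same_line h2 ctu dtu
  have := s.lt; have := t.lt; have := u.lt
  omega

end GridSeg

lemma pigeon (g : Fin 5 → Bool) :
    ∃ a b c : Fin 5, a ≠ b ∧ a ≠ c ∧ b ≠ c ∧ g a = g b ∧ g b = g c := by
  revert g; decide

/-- The complete graph `K₅` is not a contact B₀-VPG graph. -/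
theorem K5_not_contactB0VPG : ¬ ContactB0VPG (⊤ : SimpleGraph (Fin 5)) := by
  rintro ⟨f, hdisj, hadj⟩
  have htouch : ∀ v w : Fin 5, v ≠ w → GridSeg.Touch (f v) (f w) := fun v w h =>
    (hadj v w h).mp (by simpa using h)
  obtain ⟨a, b, c, hab, hac, hbc, g1, g2⟩ := pigeon (fun i => (f i).horiz)
  exact GridSeg.three_impossible g1 g2 (htouch a b hab) (htouch a c hac)
    (htouch b c hbc) (hdisj a b hab) (hdisj a c hac) (hdisj b c hbc)
end

section
/- In any contact B0-VPG representation of the complete graph K_4, there exists a grid point p that is an endpoint of each of the four segments representing the vertices. -/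
namespace GridSeg

lemma lt' (s : GridSeg) : (s.lo : ℝ) < (s.hi : ℝ) := by exact_mod_cast s.lt

lemma touch_symm {s t : GridSeg} (h : Touch s t) : Touch t s := by
  obtain ⟨p, h1, h2, h3⟩ := h
  exact ⟨p, h2, h1, h3.symm⟩

/-- Two parallel touching, interior-disjoint segments are collinear and meet
at a shared endpoint. -/
lemma par {s t : GridSeg} (h : s.horiz = t.horiz)
    (hd : Disjoint s.interior t.interior) (ht : Touch s t) :
    (s.coord : ℝ) = t.coord ∧ (((s.hi : ℝ) = t.lo) ∨ ((t.hi : ℝ) = s.lo)) := by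
  obtain ⟨p, hps, hpt, -⟩ := ht
  have hts : t.horiz = s.horiz := h.symm
  cases hb : s.horiz with
  | true =>
    rw [pts, if_pos hb] at hps
    rw [pts, if_pos (hts.trans hb)] at hpt
    obtain ⟨e1, e2, e3⟩ := hps
    obtain ⟨f1, f2, f3⟩ := hpt
    have hc : (s.coord : ℝ) = t.coord := e1.symm.trans f1
    refine ⟨hc, ?_⟩
    have hminmax : min (s.hi : ℝ) (t.hi : ℝ) ≤ max (s.lo : ℝ) (t.lo : ℝ) := by
      by_contra h'
      push_neg at h'
      set x : ℝ := (max (s.lo : ℝ) (t.lo : ℝ) + min (s.hi : ℝ) (t.hi : ℝ)) / 2 with hx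
      have hxs : (x, (s.coord : ℝ)) ∈ s.interior := by
        rw [interior, if_pos hb]
        refine ⟨rfl, ?_, ?_⟩
        · have := le_max_left (s.lo : ℝ) (t.lo : ℝ); simp only [hx]; linarith
        · have := min_le_left (s.hi : ℝ) (t.hi : ℝ); simp only [hx]; linarith
      have hxt : (x, (s.coord : ℝ)) ∈ t.interior := by
        rw [interior, if_pos (hts.trans hb)]
        refine ⟨hc, ?_, ?_⟩
        · have := le_max_right (s.lo : ℝ) (t.lo : ℝ); simp only [hx]; linarith
        · have := min_le_right (s.hi : ℝ) (t.hi : ℝ); simp only [hx]; linarith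
      exact Set.disjoint_left.mp hd hxs hxt
    have hs := s.lt'; have htlt := t.lt'
    rcases max_cases (s.lo : ℝ) (t.lo : ℝ) with ⟨he, hge⟩ | ⟨he, hge⟩ <;>
      rcases min_cases (s.hi : ℝ) (t.hi : ℝ) with ⟨he2, hge2⟩ | ⟨he2, hge2⟩
    · exfalso; linarith
    · right; linarith
    · left; linarith
    · exfalso; linarith
  | false =>
    rw [pts, if_neg (by simp [hb])] at hps
    rw [pts, if_neg (by simp [hts.trans hb])] at hpt
    obtain ⟨e1, e2, e3⟩ := hps
    obtain ⟨f1, f2, f3⟩ := hpt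
    have hc : (s.coord : ℝ) = t.coord := e1.symm.trans f1
    refine ⟨hc, ?_⟩
    have hminmax : min (s.hi : ℝ) (t.hi : ℝ) ≤ max (s.lo : ℝ) (t.lo : ℝ) := by
      by_contra h'
      push_neg at h'
      set x : ℝ := (max (s.lo : ℝ) (t.lo : ℝ) + min (s.hi : ℝ) (t.hi : ℝ)) / 2 with hx
      have hxs : ((s.coord : ℝ), x) ∈ s.interior := by
        rw [interior, if_neg (by simp [hb])]
        refine ⟨rfl, ?_, ?_⟩
        · have := le_max_left (s.lo : ℝ) (t.lo : ℝ); simp only [hx]; linarith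
        · have := min_le_left (s.hi : ℝ) (t.hi : ℝ); simp only [hx]; linarith
      have hxt : ((s.coord : ℝ), x) ∈ t.interior := by
        rw [interior, if_neg (by simp [hts.trans hb])]
        refine ⟨hc, ?_, ?_⟩
        · have := le_max_right (s.lo : ℝ) (t.lo : ℝ); simp only [hx]; linarith
        · have := min_le_right (s.hi : ℝ) (t.hi : ℝ); simp only [hx]; linarith
      exact Set.disjoint_left.mp hd hxs hxt
    have hs := s.lt'; have htlt := t.lt'
    rcases max_cases (s.lo : ℝ) (t.lo : ℝ) with ⟨he, hge⟩ | ⟨he, hge⟩ <;>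
      rcases min_cases (s.hi : ℝ) (t.hi : ℝ) with ⟨he2, hge2⟩ | ⟨he2, hge2⟩
    · exfalso; linarith
    · right; linarith
    · left; linarith
    · exfalso; linarith

/-- Perpendicular touching segments: bounds on the crossing point. -/
lemma perp {s t : GridSeg} (hs : s.horiz = true) (ht : t.horiz = false)
    (htc : Touch s t) :
    (s.lo : ℝ) ≤ t.coord ∧ (t.coord : ℝ) ≤ s.hi ∧
      (t.lo : ℝ) ≤ s.coord ∧ (s.coord : ℝ) ≤ t.hi := by
  obtain ⟨p, hps, hpt, -⟩ := htc
  rw [pts, if_pos hs] at hps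
  rw [pts, if_neg (by simp [ht])] at hpt
  obtain ⟨e1, e2, e3⟩ := hps
  obtain ⟨f1, f2, f3⟩ := hpt
  refine ⟨by rw [← f1]; exact e2, by rw [← f1]; exact e3,
    by rw [← e1]; exact f2, by rw [← e1]; exact f3⟩

/-- A third segment touching two collinear consecutive horizontal segments
must be vertical. -/
lemma vert_of {s1 s2 s3 : GridSeg} (h1 : s1.horiz = true) (h2 : s2.horiz = true)
    (hkey : (s1.hi : ℝ) = s2.lo)
    (d13 : Disjoint s1.interior s3.interior) (d23 : Disjoint s2.interior s3.interior)
    (t13 : Touch s1 s3) (t23 : Touch s2 s3) : s3.horiz = false := by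
  cases hb : s3.horiz with
  | false => rfl
  | true =>
    exfalso
    obtain ⟨-, hA⟩ := par (h1.trans hb.symm) d13 t13
    obtain ⟨-, hB⟩ := par (h2.trans hb.symm) d23 t23
    have l1 := s1.lt'; have l2 := s2.lt'; have l3 := s3.lt'
    rcases hA with hA | hA <;> rcases hB with hB | hB <;> linarith

lemma core2 {s1 s2 s3 s4 : GridSeg} (h1 : s1.horiz = true) (h2 : s2.horiz = true)
    (hc : (s1.coord : ℝ) = s2.coord) (hkey : (s1.hi : ℝ) = s2.lo)
    (d13 : Disjoint s1.interior s3.interior) (d23 : Disjoint s2.interior s3.interior)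
    (d14 : Disjoint s1.interior s4.interior) (d24 : Disjoint s2.interior s4.interior)
    (d34 : Disjoint s3.interior s4.interior)
    (t13 : Touch s1 s3) (t23 : Touch s2 s3) (t14 : Touch s1 s4) (t24 : Touch s2 s4)
    (t34 : Touch s3 s4) :
    ∃ p : ℝ × ℝ, p ∈ s1.ends ∧ p ∈ s2.ends ∧ p ∈ s3.ends ∧ p ∈ s4.ends := by
  have h3 : s3.horiz = false := vert_of h1 h2 hkey d13 d23 t13 t23
  have h4 : s4.horiz = false := vert_of h1 h2 hkey d14 d24 t14 t24
  obtain ⟨a13, b13, c13, e13⟩ := perp h1 h3 t13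
  obtain ⟨a23, b23, c23, e23⟩ := perp h2 h3 t23
  obtain ⟨a14, b14, c14, e14⟩ := perp h1 h4 t14
  obtain ⟨a24, b24, c24, e24⟩ := perp h2 h4 t24
  -- s3, s4 pass through x = s1.hi
  have e3 : (s3.coord : ℝ) = s1.hi := by linarith
  have e4 : (s4.coord : ℝ) = s1.hi := by linarith
  obtain ⟨-, hcase⟩ := par (h3.trans h4.symm) d34 t34
  -- the touching point between s3 and s4 must be (s1.hi, s1.coord)
  refine ⟨((s1.hi : ℝ), (s1.coord : ℝ)), ?_, ?_, ?_, ?_⟩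
  · rw [ends, if_pos h1]; right; rfl
  · rw [ends, if_pos h2]; left
    show ((s1.hi : ℝ), (s1.coord : ℝ)) = ((s2.lo : ℝ), (s2.coord : ℝ))
    rw [hkey, hc]
  · rw [ends, if_neg (by simp [h3])]
    rcases hcase with hk | hk
    · -- s3.hi = s4.lo, both equal s1.coord
      have h3hi : (s3.hi : ℝ) = s1.coord := by linarith
      right
      show ((s1.hi : ℝ), (s1.coord : ℝ)) = ((s3.coord : ℝ), (s3.hi : ℝ))
      rw [e3, h3hi]
    · have h3lo : (s3.lo : ℝ) = s1.coord := by linarith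
      left
      show ((s1.hi : ℝ), (s1.coord : ℝ)) = ((s3.coord : ℝ), (s3.lo : ℝ))
      rw [e3, h3lo]
  · rw [ends, if_neg (by simp [h4])]
    rcases hcase with hk | hk
    · have h4lo : (s4.lo : ℝ) = s1.coord := by linarith
      left
      show ((s1.hi : ℝ), (s1.coord : ℝ)) = ((s4.coord : ℝ), (s4.lo : ℝ))
      rw [e4, h4lo]
    · have h4hi : (s4.hi : ℝ) = s1.coord := by linarith
      right
      show ((s1.hi : ℝ), (s1.coord : ℝ)) = ((s4.coord : ℝ), (s4.hi : ℝ))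
      rw [e4, h4hi]


/-- Reflecting a segment along the main diagonal. -/
def flip (s : GridSeg) : GridSeg := ⟨!s.horiz, s.coord, s.lo, s.hi, s.lt⟩

lemma pts_flip (s : GridSeg) : s.flip.pts = Prod.swap ⁻¹' s.pts := by
  cases hb : s.horiz <;>
    · ext p
      simp [pts, flip, hb, Prod.swap, and_assoc]

lemma interior_flip (s : GridSeg) : s.flip.interior = Prod.swap ⁻¹' s.interior := by
  cases hb : s.horiz <;>
    · ext p
      simp [interior, flip, hb, Prod.swap, and_assoc]

lemma ends_flip (s : GridSeg) : s.flip.ends = Prod.swap ⁻¹' s.ends := by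
  cases hb : s.horiz <;>
    · ext p
      simp [ends, flip, hb, Prod.swap, Prod.ext_iff, and_comm]

lemma touch_flip {s t : GridSeg} (h : Touch s t) : Touch s.flip t.flip := by
  obtain ⟨p, h1, h2, h3⟩ := h
  refine ⟨Prod.swap p, ?_, ?_, ?_⟩
  · rw [pts_flip]; simpa using h1
  · rw [pts_flip]; simpa using h2
  · rw [ends_flip, ends_flip]
    rcases h3 with h3 | h3
    · left; simpa using h3
    · right; simpa using h3

lemma disjoint_flip {s t : GridSeg} (h : Disjoint s.interior t.interior) :
    Disjoint s.flip.interior t.flip.interior := by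
  rw [interior_flip, interior_flip]
  exact Disjoint.preimage _ h

lemma core {s1 s2 s3 s4 : GridSeg} (h1 : s1.horiz = true) (h2 : s2.horiz = true)
    (d12 : Disjoint s1.interior s2.interior)
    (d13 : Disjoint s1.interior s3.interior) (d23 : Disjoint s2.interior s3.interior)
    (d14 : Disjoint s1.interior s4.interior) (d24 : Disjoint s2.interior s4.interior)
    (d34 : Disjoint s3.interior s4.interior)
    (t12 : Touch s1 s2)
    (t13 : Touch s1 s3) (t23 : Touch s2 s3) (t14 : Touch s1 s4) (t24 : Touch s2 s4)
    (t34 : Touch s3 s4) :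
    ∃ p : ℝ × ℝ, p ∈ s1.ends ∧ p ∈ s2.ends ∧ p ∈ s3.ends ∧ p ∈ s4.ends := by
  obtain ⟨hc, hcase⟩ := par (h1.trans h2.symm) d12 t12
  rcases hcase with hk | hk
  · exact core2 h1 h2 hc hk d13 d23 d14 d24 d34 t13 t23 t14 t24 t34
  · obtain ⟨p, e2, e1, e3, e4⟩ :=
      core2 h2 h1 hc.symm hk d23 d13 d24 d14 d34 t23 t13 t24 t14 t34
    exact ⟨p, e1, e2, e3, e4⟩

lemma coreAny {s1 s2 s3 s4 : GridSeg} (hpar : s1.horiz = s2.horiz)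
    (d12 : Disjoint s1.interior s2.interior)
    (d13 : Disjoint s1.interior s3.interior) (d23 : Disjoint s2.interior s3.interior)
    (d14 : Disjoint s1.interior s4.interior) (d24 : Disjoint s2.interior s4.interior)
    (d34 : Disjoint s3.interior s4.interior)
    (t12 : Touch s1 s2)
    (t13 : Touch s1 s3) (t23 : Touch s2 s3) (t14 : Touch s1 s4) (t24 : Touch s2 s4)
    (t34 : Touch s3 s4) :
    ∃ p : ℝ × ℝ, p ∈ s1.ends ∧ p ∈ s2.ends ∧ p ∈ s3.ends ∧ p ∈ s4.ends := by
  cases hb : s1.horiz with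
  | true =>
    exact core hb (hpar.symm.trans hb) d12 d13 d23 d14 d24 d34 t12 t13 t23 t14 t24 t34
  | false =>
    have h1 : s1.flip.horiz = true := by simp [flip, hb]
    have h2 : s2.flip.horiz = true := by simp [flip, ← hpar, hb]
    obtain ⟨p, e1, e2, e3, e4⟩ :=
      core h1 h2 (disjoint_flip d12) (disjoint_flip d13) (disjoint_flip d23)
        (disjoint_flip d14) (disjoint_flip d24) (disjoint_flip d34)
        (touch_flip t12) (touch_flip t13) (touch_flip t23) (touch_flip t14)
        (touch_flip t24) (touch_flip t34)
    rw [ends_flip] at e1 e2 e3 e4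
    exact ⟨Prod.swap p, e1, e2, e3, e4⟩


end GridSeg

/-- In any contact B₀-VPG representation of `K₄`, there is a point `p`
which is an endpoint of each of the four segments representing the vertices. -/
theorem K4_common_endpoint (f : Fin 4 → GridSeg)
    (hrep : IsB0Rep (⊤ : SimpleGraph (Fin 4)) f) :
    ∃ p : ℝ × ℝ, ∀ v : Fin 4, p ∈ GridSeg.ends (f v) := by
  obtain ⟨hd, hadj⟩ := hrep
  have ht : ∀ v w : Fin 4, v ≠ w → GridSeg.Touch (f v) (f w) := by
    intro v w h
    exact (hadj v w h).mp (by simpa using h)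
  have key : ∀ i j k l : Fin 4, (f i).horiz = (f j).horiz →
      i ≠ j → i ≠ k → i ≠ l → j ≠ k → j ≠ l → k ≠ l →
      ∃ p : ℝ × ℝ, p ∈ (f i).ends ∧ p ∈ (f j).ends ∧ p ∈ (f k).ends ∧ p ∈ (f l).ends := by
    intro i j k l hp hij hik hil hjk hjl hkl
    exact GridSeg.coreAny hp (hd i j hij) (hd i k hik) (hd j k hjk) (hd i l hil)
      (hd j l hjl) (hd k l hkl) (ht i j hij) (ht i k hik) (ht j k hjk) (ht i l hil)
      (ht j l hjl) (ht k l hkl)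
  by_cases h01 : (f 0).horiz = (f 1).horiz
  · obtain ⟨p, e0, e1, e2, e3⟩ := key 0 1 2 3 h01 (by decide) (by decide) (by decide)
      (by decide) (by decide) (by decide)
    exact ⟨p, fun v => by fin_cases v <;> assumption⟩
  · by_cases h02 : (f 0).horiz = (f 2).horiz
    · obtain ⟨p, e0, e2, e1, e3⟩ := key 0 2 1 3 h02 (by decide) (by decide) (by decide)
        (by decide) (by decide) (by decide)
      exact ⟨p, fun v => by fin_cases v <;> assumption⟩
    · have h12 : (f 1).horiz = (f 2).horiz := by
        cases hb0 : (f 0).horiz <;> cases hb1 : (f 1).horiz <;>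
          cases hb2 : (f 2).horiz <;> simp_all
      obtain ⟨p, e1, e2, e0, e3⟩ := key 1 2 0 3 h12 (by decide) (by decide) (by decide)
        (by decide) (by decide) (by decide)
      exact ⟨p, fun v => by fin_cases v <;> assumption⟩
end

section
/- Let C = v_1 ... v_k be a cycle (k ≥ 4) with every vertex of Type 1 except exactly one vertex, which is of Type 0. Then C admits a feasible orientation: orienting each edge v_j v_{j+1} along the cycle starting after the Type-0 vertex and leaving the edge entering the Type-0 vertex's predecessor side unoriented satisfies all feasibility conditions. -/
/-- Cyclic shift: the element `i + m (mod k)` of `Fin k`. -/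
def cycShift {k : ℕ} (i : Fin k) (m : ℕ) : Fin k :=
  i + ⟨m % k, Nat.mod_lt m (Nat.lt_of_le_of_lt (Nat.zero_le i.1) i.isLt)⟩

/-- `c` lists the vertices of an induced cycle (a hole, when `k ≥ 4`) of `G`, in cyclic
order: `c` is injective and two of its vertices are adjacent iff they are consecutive. -/
def IsInducedCycle {V : Type*} (G : SimpleGraph V) {k : ℕ} (c : Fin k → V) : Prop :=
  Function.Injective c ∧
    ∀ i j : Fin k, G.Adj (c i) (c j) ↔ (i ≠ j ∧ (i = cycShift j 1 ∨ j = cycShift i 1))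

/- `o` encodes a partial orientation of the edges of the cycle on `Fin k`: the edge
`e_i` joins `v_i` and `v_{i+1}`, and `o i = none` means `e_i` is not oriented,
`o i = some true` means `e_i` is oriented from `v_i` towards `v_{i+1}`, and
`o i = some false` means `e_i` is oriented from `v_{i+1}` towards `v_i`.
(In particular no edge can be oriented both ways.) -/

/-- Vertex `v_i` has an incoming oriented edge. -/
def HasIncoming {k : ℕ} (o : Fin k → Option Bool) (i : Fin k) : Prop :=
  o (cycShift i (k - 1)) = some true ∨ o i = some false

/-- a cycle with exactly one vertex `i₀` of Type 0 and all other vertices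
of Type 1 (all `S_i = ∅`) admits a feasible orientation: orient each edge along the
cycle and leave the edge `v_{i₀-1} v_{i₀}` entering the Type-0 vertex unoriented. -/
theorem one_type0_feasible (k : ℕ) (hk : 4 ≤ k) (t : Fin k → ℕ) (i₀ : Fin k)
    (ht : ∀ i, t i = if i = i₀ then 0 else 1) :
    ∃ o : Fin k → Option Bool,
      o (cycShift i₀ (k - 1)) = none ∧
      (∀ i, t i = 1 → HasIncoming o i) ∧
      (Odd k → ∃ i, o i = none) := by
  refine ⟨fun i => if i = cycShift i₀ (k - 1) then none else some true, by simp, ?_, ?_⟩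
  · intro i hti
    have hi : i ≠ i₀ := by
      intro h; rw [ht, if_pos h] at hti; exact absurd hti (by norm_num)
    left
    have : cycShift i (k - 1) ≠ cycShift i₀ (k - 1) := by
      intro h
      exact hi (add_right_cancel h)
    simp [this]
  · intro _
    exact ⟨cycShift i₀ (k - 1), by simp⟩
end

section
/- An even cycle with exactly one vertex of Type 4 and all other vertices of Type 1 admits no feasible orientation. -/
/-- an even cycle with exactly one vertex (`v_1`, of index `0`) of Type 4
and all other vertices of Type 1 admits no feasible orientation: the Type-4 vertex needs
both incident edges oriented towards it and every other vertex needs an incoming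
oriented edge. -/
theorem even_one_type4_not_feasible (k : ℕ) (hk : 4 ≤ k) (hke : Even k) :
    ¬ ∃ o : Fin k → Option Bool,
        (o (cycShift (⟨0, by omega⟩ : Fin k) (k - 1)) = some true ∧
          o (⟨0, by omega⟩ : Fin k) = some false) ∧
        (∀ i : Fin k, i ≠ (⟨0, by omega⟩ : Fin k) → HasIncoming o i) := by

  rintro ⟨o, ⟨h1, h2⟩, h3⟩
  haveI : NeZero k := ⟨by omega⟩
  set z : Fin k := ⟨0, by omega⟩ with hz
  have hinc : ∀ i : Fin k, o (cycShift i (k-1)) = some true ∨ o i = some false := by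
    intro i
    by_cases hi : i = z
    · subst hi; exact Or.inl h1
    · exact h3 i hi
  set f : Fin k → Fin k := fun i => if o (cycShift i (k-1)) = some true then cycShift i (k-1) else i with hfdef
  have hshift : Function.Injective (fun i : Fin k => cycShift i (k-1)) := by
    intro a b hab
    simpa [cycShift] using add_right_cancel (a := a) (b := _) (c := b) hab
  have hf : Function.Injective f := by
    intro i j hij
    simp only [hfdef] at hij
    by_cases hi : o (cycShift i (k-1)) = some true <;>
      by_cases hj : o (cycShift j (k-1)) = some true <;>
      simp only [hi, hj, if_pos, if_neg, if_true, if_false] at hij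
    · exact hshift hij
    · have hfj := (hinc j).resolve_left hj
      rw [← hij, hi] at hfj
      exact absurd hfj (by simp)
    · have hfi := (hinc i).resolve_left hi
      rw [hij, hj] at hfi
      exact absurd hfi (by simp)
    · exact hij
  obtain ⟨j, hj⟩ := Finite.surjective_of_injective hf z
  by_cases hc : o (cycShift j (k-1)) = some true
  · have hfz : f j = cycShift j (k-1) := if_pos hc
    rw [hj] at hfz
    rw [← hfz, h2] at hc
    exact absurd hc (by simp)
  · have hfz : f j = j := if_neg hc
    rw [hj] at hfz
    rw [← hfz] at hc
    exact hc h1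
end

section
/- Let G be a diamond-free circular-arc graph containing a hole C = v_1 ... v_k. Then the vertices of G − C can be partitioned into 2k (possibly empty) pairwise anticomplete sets U_1,...,U_k, S_1,...,S_k such that for each i, G[U_i] is a disjoint union of cliques with N_C(u) = {v_i} for every u ∈ U_i, and G[S_i] is a clique with N_C(s) = {v_i, v_{i+1}} for every s ∈ S_i. -/
/-- The arc of the circle `ℝ/ℤ` starting at `a` and of length `l`. -/
def circArc (a l : ℝ) : Set (AddCircle (1 : ℝ)) :=
  {x | ∃ u : ℝ, 0 ≤ u ∧ u ≤ l ∧ x = ((a + u : ℝ) : AddCircle (1 : ℝ))}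

/-- `G` is a circular-arc graph: it is the intersection graph of a family of arcs
on a circle. -/
def IsCircularArcGraph {V : Type*} (G : SimpleGraph V) : Prop :=
  ∃ (a l : V → ℝ), (∀ v, 0 < l v) ∧
    ∀ v w : V, v ≠ w →
      (G.Adj v w ↔ (circArc (a v) (l v) ∩ circArc (a w) (l w)).Nonempty)

/-- `G` contains no induced diamond (`K₄` minus an edge). -/
def DiamondFree {V : Type*} (G : SimpleGraph V) : Prop :=
  ∀ a b c d : V, a ≠ b → a ≠ c → a ≠ d → b ≠ c → b ≠ d → c ≠ d →
    G.Adj a b → G.Adj a c → G.Adj a d → G.Adj b c → G.Adj b d → ¬ G.Adj c d → False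

open Set Relation

section FinArith

open Fin.NatCast Fin.CommRing

variable {k : ℕ} [NeZero k]

lemma Fin.natCast_ne_zero_of_lt {n : ℕ} (h0 : n ≠ 0) (hn : n < k) : (n : Fin k) ≠ 0 := by
  rw [Ne, Fin.natCast_eq_zero]
  exact fun h => h0 (Nat.eq_zero_of_dvd_of_lt h hn)

lemma Fin.add_one_ne_self_of_two_le (hk : 2 ≤ k) (m : Fin k) : m + 1 ≠ m := fun h =>
  Fin.natCast_ne_zero_of_lt (k := k) (n := 1) one_ne_zero (by omega)
    (by push_cast; linear_combination h)

lemma Fin.add_two_ne_self_of_three_le (hk : 3 ≤ k) (m : Fin k) : m + 1 + 1 ≠ m := fun h =>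
  Fin.natCast_ne_zero_of_lt (k := k) (n := 2) two_ne_zero (by omega)
    (by push_cast; linear_combination h)

lemma Fin.add_three_ne_self_of_four_le (hk : 4 ≤ k) (m : Fin k) : m + 1 + 1 + 1 ≠ m := fun h =>
  Fin.natCast_ne_zero_of_lt (k := k) (n := 3) three_ne_zero (by omega)
    (by push_cast; linear_combination h)

lemma cycShift_one (i : Fin k) : cycShift i 1 = i + 1 := rfl

end FinArith

def HasCyclicIntersections {X : Type*} {k : ℕ} [NeZero k] (s : Fin k → Set X) : Prop :=
  ∀ m m', m ≠ m' → ((s m ∩ s m').Nonempty ↔ m = m' + 1 ∨ m' = m + 1)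

theorem IsPreconnected.reflTransGen_of_subset_iUnion {X ι : Type*} [TopologicalSpace X]
    [Finite ι] {S : Set X} (hS : IsPreconnected S) {B : ι → Set X} (hB : ∀ m, IsClosed (B m))
    (hcov : S ⊆ ⋃ m, B m) {i j : ι} (hi : (S ∩ B i).Nonempty) (hj : (S ∩ B j).Nonempty) :
    ReflTransGen (fun m m' => (S ∩ (B m ∩ B m')).Nonempty) i j := by
  -- the sets reached by chains from `i` and the others make two closed sets, disjoint on `S`
  set R := {m | ReflTransGen (fun m m' => (S ∩ (B m ∩ B m')).Nonempty) i m}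
  have hR : ∀ m ∈ R, ∀ m' ∉ R, ∀ x ∈ S, x ∈ B m → x ∉ B m' := fun m hm m' hm' x hx hxm hxm' =>
    hm' (hm.tail ⟨x, hx, hxm, hxm'⟩)
  have hsplit : S ⊆ (⋃ m ∈ R, B m) ∨ S ⊆ ⋃ m ∈ Rᶜ, B m := by
    refine isPreconnected_iff_subset_of_disjoint_closed.mp hS _ _
      ((toFinite R).isClosed_biUnion fun m _ => hB m)
      ((toFinite Rᶜ).isClosed_biUnion fun m _ => hB m) (fun x hx => ?_) ?_
    · obtain ⟨m, hm⟩ := mem_iUnion.mp (hcov hx)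
      by_cases hmR : m ∈ R
      · exact Or.inl (mem_biUnion hmR hm)
      · exact Or.inr (mem_biUnion hmR hm)
    · refine eq_empty_of_forall_notMem ?_
      simp only [mem_inter_iff, mem_iUnion]
      rintro x ⟨hxS, ⟨m, hm, hxm⟩, ⟨m', hm', hxm'⟩⟩
      exact hR m hm m' hm' x hxS hxm hxm'
  rcases hsplit with hS | hS
  · obtain ⟨x, hxS, hxj⟩ := hj
    obtain ⟨m, hm, hxm⟩ := mem_iUnion₂.mp (hS hxS)
    exact hm.tail ⟨x, hxS, hxm, hxj⟩
  · obtain ⟨x, hxS, hxi⟩ := hi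
    obtain ⟨m, hm, hxm⟩ := mem_iUnion₂.mp (hS hxS)
    exact absurd hxm (hR i ReflTransGen.refl m hm x hxS hxi)

open Fin.NatCast Fin.CommRing in
theorem Real.not_hasCyclicIntersections {k : ℕ} [NeZero k] (hk : 4 ≤ k) {I : Fin k → Set ℝ}
    (hconn : ∀ m, IsPreconnected (I m)) (hcl : ∀ m, IsClosed (I m)) :
    ¬ HasCyclicIntersections I := by
  intro hI
  have hne : ∀ m : Fin k, m + 1 ≠ m := Fin.add_one_ne_self_of_two_le (by omega)
  obtain ⟨x, hx0, hx1⟩ := (hI 0 1 (by simpa using (hne 0).symm)).mpr (Or.inr (zero_add 1).symm)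
  obtain ⟨y, hy0, hyw⟩ := (hI 0 (-1) (by simpa using hne (-1))).mpr (Or.inl (neg_add_cancel 1).symm)
  have hdisj : I 1 ∩ I (-1) = ∅ := by
    refine not_nonempty_iff_eq_empty.mp fun h => ?_
    rcases (hI 1 (-1) fun h' => Fin.add_two_ne_self_of_three_le (by omega) (-1 : Fin k)
      (by linear_combination h')).mp h with h | h
    · exact hne (-1) (by simpa using h.symm)
    · exact Fin.add_three_ne_self_of_four_le hk (-1) (by linear_combination -h)
  set J := ⋃ n ∈ Icc 1 (k - 1), I (n : Fin k)
  have hJ : IsPreconnected J := IsPreconnected.biUnion_of_chain ordConnected_Icc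
    (fun n _ => hconn _) fun n _ _ => by
      rw [Order.succ_eq_add_one]
      exact (hI _ _ (by push_cast; exact (hne _).symm)).mpr (Or.inr (by push_cast; rfl))
  have hxJ : x ∈ J := mem_biUnion (mem_Icc.mpr ⟨le_rfl, by omega⟩) (by rwa [Nat.cast_one])
  have hyJ : y ∈ J := mem_biUnion (mem_Icc.mpr ⟨by omega, le_rfl⟩)
    (by rwa [Nat.cast_sub (by omega), Fin.natCast_self, Nat.cast_one, zero_sub])
  have hsub : uIcc x y ⊆ I 1 ∪ I (-1) := by
    intro z hz
    obtain ⟨n, hn, hzn⟩ := mem_iUnion₂.mp (hJ.ordConnected.uIcc_subset hxJ hyJ hz)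
    have hz0 := (hconn 0).ordConnected.uIcc_subset hx0 hy0 hz
    have hn := mem_Icc.mp hn
    rcases (hI n 0 (Fin.natCast_ne_zero_of_lt (by omega) (by omega))).mp ⟨z, hzn, hz0⟩ with h | h
    · left; rwa [h, zero_add] at hzn
    · right; rwa [eq_neg_of_add_eq_zero_left h.symm] at hzn
  rcases isPreconnected_iff_subset_of_disjoint_closed.mp isPreconnected_uIcc _ _ (hcl 1) (hcl (-1))
    hsub (by rw [hdisj, inter_empty]) with h | h
  · exact hdisj.subset ⟨h right_mem_uIcc, hyw⟩
  · exact hdisj.subset ⟨hx1, h left_mem_uIcc⟩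

local notation "𝕋" => AddCircle (1 : ℝ)

lemma circArc_eq_image (a l : ℝ) : circArc a l = ((↑) : ℝ → 𝕋) '' Icc a (a + l) := by
  ext x
  constructor
  · rintro ⟨u, hu0, hul, rfl⟩
    exact ⟨a + u, ⟨by linarith, by linarith⟩, rfl⟩
  · rintro ⟨y, ⟨hay, hyl⟩, rfl⟩
    exact ⟨y - a, by linarith, by linarith, by rw [add_sub_cancel]⟩

lemma circArc_congr {a b : ℝ} (h : (a : 𝕋) = b) (l : ℝ) : circArc a l = circArc b l := by
  simp only [circArc, AddCircle.coe_add, h]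

lemma isClosed_circArc (a l : ℝ) : IsClosed (circArc a l) := by
  rw [circArc_eq_image]
  exact (isCompact_Icc.image (f := ((↑) : ℝ → 𝕋)) continuous_quotient_mk').isClosed

lemma isPreconnected_circArc (a l : ℝ) : IsPreconnected (circArc a l) := by
  rw [circArc_eq_image]
  exact isPreconnected_Icc.image _ continuous_quotient_mk'.continuousOn

lemma mem_circArc_self (a : ℝ) {l : ℝ} (hl : 0 ≤ l) : (a : 𝕋) ∈ circArc a l :=
  ⟨0, le_rfl, hl, by rw [add_zero]⟩

lemma exists_circArc_eq_image_Icc_subset {a l p : ℝ} (hp : (p : 𝕋) ∉ circArc a l) :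
    ∃ b, circArc a l = ((↑) : ℝ → 𝕋) '' Icc b (b + l) ∧ Icc b (b + l) ⊆ Ico p (p + 1) := by
  obtain ⟨⟨b, hb⟩, hba⟩ : ∃ y : Ico p (p + 1), ((y : ℝ) : 𝕋) = a :=
    ⟨_, AddCircle.coe_equivIco⟩
  have harc : circArc a l = circArc b l := circArc_congr hba.symm l
  refine ⟨b, harc ▸ circArc_eq_image b l, fun y hy => ⟨hb.1.trans hy.1, hy.2.trans_lt ?_⟩⟩
  by_contra! h
  refine hp (harc ▸ ⟨p + 1 - b, by linarith [hb.2], by linarith, ?_⟩)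
  rw [add_sub_cancel, AddCircle.coe_add_period]

theorem iUnion_circArc_eq_univ {k : ℕ} [NeZero k] (hk : 4 ≤ k) {a l : Fin k → ℝ}
    (h : HasCyclicIntersections fun m => circArc (a m) (l m)) :
    ⋃ m, circArc (a m) (l m) = univ := by
  refine eq_univ_of_forall fun p => ?_
  by_contra hp
  obtain ⟨p, rfl⟩ := QuotientAddGroup.mk_surjective p
  simp only [mem_iUnion, not_exists] at hp
  choose b hb hbp using fun m => exists_circArc_eq_image_Icc_subset (hp m)
  have hinj : InjOn ((↑) : ℝ → 𝕋) (Ico p (p + 1)) := fun x hx y hy =>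
    (AddCircle.coe_eq_coe_iff_of_mem_Ico hx hy).mp
  refine Real.not_hasCyclicIntersections hk (I := fun m => Icc (b m) (b m + l m))
    (fun m => isPreconnected_Icc) (fun m => isClosed_Icc) fun m m' hne => ?_
  rw [← h m m' hne]
  dsimp only
  rw [hb, hb, ← hinj.image_inter (hbp m) (hbp m'), image_nonempty]

section Consecutive

variable {α : Type*} [Add α] [One α] {N : α → Prop}

theorem eq_or_consecutive_of_reflTransGen [IsRightCancelAdd α]
    (hN : ∀ m, N m → N (m + 1) → ¬ N (m + 1 + 1)) {r : α → α → Prop}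
    (hr : ∀ m m', r m m' → N m' ∧ (m' = m ∨ m = m' + 1 ∨ m' = m + 1)) {i j : α} (hi : N i)
    (hij : ReflTransGen r i j) : N j ∧ (j = i ∨ j = i + 1 ∨ i = j + 1) := by
  induction hij with
  | refl => exact ⟨hi, Or.inl rfl⟩
  | @tail m m' _ hmm' ih =>
    obtain ⟨hm, him⟩ := ih
    obtain ⟨hm', hmm'⟩ := hr m m' hmm'
    refine ⟨hm', ?_⟩
    rcases him with rfl | rfl | rfl <;> rcases hmm' with rfl | h | rfl
    · exact Or.inl rfl
    · exact Or.inr (Or.inr h)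
    · exact Or.inr (Or.inl rfl)
    · exact Or.inr (Or.inl rfl)
    · exact Or.inl (add_right_cancel h).symm
    · exact absurd hm' (hN i hi hm)
    · exact Or.inr (Or.inr rfl)
    · exact absurd hi (h ▸ hN m' hm' (h ▸ hm))
    · exact Or.inl rfl

theorem eq_singleton_or_eq_pair_of_consecutive (hN : ∀ m, N m → N (m + 1) → ¬ N (m + 1 + 1))
    (hcons : ∀ i j, N i → N j → j = i ∨ j = i + 1 ∨ i = j + 1) {i : α} (hi : N i) :
    (∃ i, ∀ m, N m ↔ m = i) ∨ ∃ i, ∀ m, N m ↔ m = i ∨ m = i + 1 := by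
  by_cases hsingle : ∀ m, N m → m = i
  · exact Or.inl ⟨i, fun m => ⟨hsingle m, fun h => h ▸ hi⟩⟩
  push Not at hsingle
  obtain ⟨j, hj, hji⟩ := hsingle
  obtain ⟨i₀, h₀, h₁⟩ : ∃ i₀, N i₀ ∧ N (i₀ + 1) := by
    rcases hcons i j hi hj with h | h | h
    exacts [absurd h hji, ⟨i, hi, h ▸ hj⟩, ⟨j, hj, h ▸ hi⟩]
  refine Or.inr ⟨i₀, fun m => ⟨fun hm => ?_, by rintro (rfl | rfl) <;> assumption⟩⟩
  rcases hcons i₀ m h₀ hm with h | h | h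
  exacts [Or.inl h, Or.inr h, absurd (h ▸ h₁) (hN m hm (h ▸ h₀))]

end Consecutive

theorem DiamondFree.adj_of_mem_commonNeighbors {V : Type*} {G : SimpleGraph V}
    (hD : DiamondFree G) {a b x y : V} (hab : G.Adj a b) (hx : x ∈ G.commonNeighbors a b)
    (hy : y ∈ G.commonNeighbors a b) (hxy : x ≠ y) : G.Adj x y := by
  by_contra h
  exact hD a b x y hab.ne hx.1.ne hy.1.ne hx.2.ne hy.2.ne hxy hab hx.1 hy.1 hx.2 hy.2 h

section Hole

variable {V : Type*} {G : SimpleGraph V} {k : ℕ} {c : Fin k → V}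

theorem IsInducedCycle.adj_iff [NeZero k] (hC : IsInducedCycle G c) (hk : 2 ≤ k) (i j : Fin k) :
    G.Adj (c i) (c j) ↔ i = j + 1 ∨ j = i + 1 := by
  rw [hC.2, cycShift_one, cycShift_one, and_iff_right_iff_imp]
  rintro (h | h) rfl <;> exact Fin.add_one_ne_self_of_two_le hk i h.symm

theorem IsInducedCycle.adj_add_one [NeZero k] (hC : IsInducedCycle G c) (hk : 2 ≤ k) (i : Fin k) :
    G.Adj (c i) (c (i + 1)) :=
  (hC.adj_iff hk i (i + 1)).mpr (Or.inr rfl)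

theorem IsInducedCycle.not_adj_add_two [NeZero k] (hC : IsInducedCycle G c) (hk : 4 ≤ k)
    (i : Fin k) : ¬ G.Adj (c i) (c (i + 1 + 1)) := by
  rw [hC.adj_iff (by omega)]
  rintro (h | h)
  · exact Fin.add_three_ne_self_of_four_le hk i h.symm
  · exact Fin.add_one_ne_self_of_two_le (by omega) (i + 1) h

theorem DiamondFree.not_adj_of_adj_of_adj [NeZero k] (hD : DiamondFree G) (hC : IsInducedCycle G c)
    (hk : 4 ≤ k) {v : V} (m : Fin k) (h₀ : G.Adj v (c m)) (h₁ : G.Adj v (c (m + 1))) :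
    ¬ G.Adj v (c (m + 1 + 1)) := fun h₂ =>
  hC.not_adj_add_two hk m <| hD.adj_of_mem_commonNeighbors h₁
    ⟨h₀, (hC.adj_add_one (by omega) m).symm⟩ ⟨h₂, hC.adj_add_one (by omega) (m + 1)⟩
    (hC.1.ne (Fin.add_two_ne_self_of_three_le (by omega) m).symm)

variable (G c) in
/-- The set `U_i`. -/
def attachedTo (i : Fin k) : Set V :=
  {v | v ∉ range c ∧ ∀ m, G.Adj v (c m) ↔ m = i}

variable (G c) in
/-- The set `S_i`. -/
def attachedToEdge [NeZero k] (i : Fin k) : Set V :=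
  {v | v ∉ range c ∧ ∀ m, G.Adj v (c m) ↔ m = i ∨ m = i + 1}

variable {i j : Fin k} {u v w : V}

theorem disjoint_attachedTo (hij : i ≠ j) : Disjoint (attachedTo G c i) (attachedTo G c j) :=
  disjoint_left.mpr fun _ hi hj => hij ((hj.2 i).mp ((hi.2 i).mpr rfl))

theorem disjoint_attachedToEdge [NeZero k] (hk : 3 ≤ k) (hij : i ≠ j) :
    Disjoint (attachedToEdge G c i) (attachedToEdge G c j) := by
  refine disjoint_left.mpr fun v hi hj => ?_
  obtain h | h := (hj.2 i).mp ((hi.2 i).mpr (Or.inl rfl))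
  · exact hij h
  obtain h' | h' := (hj.2 (i + 1)).mp ((hi.2 (i + 1)).mpr (Or.inr rfl))
  · exact Fin.add_two_ne_self_of_three_le hk j (by rw [← h, ← h'])
  · exact hij (add_right_cancel h')

theorem disjoint_attachedTo_attachedToEdge [NeZero k] (hk : 2 ≤ k) :
    Disjoint (attachedTo G c i) (attachedToEdge G c j) := by
  refine disjoint_left.mpr fun v hi hj => ?_
  have h := (hi.2 j).mp ((hj.2 j).mpr (Or.inl rfl))
  have h' := (hi.2 (j + 1)).mp ((hj.2 (j + 1)).mpr (Or.inr rfl))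
  exact Fin.add_one_ne_self_of_two_le hk j (h'.trans h.symm)

theorem DiamondFree.adj_of_mem_attachedTo (hD : DiamondFree G) (hu : u ∈ attachedTo G c i)
    (hv : v ∈ attachedTo G c i) (hw : w ∈ attachedTo G c i) (huv : G.Adj u v) (hvw : G.Adj v w)
    (huw : u ≠ w) : G.Adj u w :=
  hD.adj_of_mem_commonNeighbors ((hv.2 i).mpr rfl) ⟨huv.symm, ((hu.2 i).mpr rfl).symm⟩
    ⟨hvw, ((hw.2 i).mpr rfl).symm⟩ huw

theorem DiamondFree.adj_of_mem_attachedToEdge [NeZero k] (hD : DiamondFree G)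
    (hC : IsInducedCycle G c) (hk : 2 ≤ k) (hu : u ∈ attachedToEdge G c i)
    (hw : w ∈ attachedToEdge G c i) (huw : u ≠ w) : G.Adj u w :=
  hD.adj_of_mem_commonNeighbors (hC.adj_add_one hk i)
    ⟨((hu.2 i).mpr (Or.inl rfl)).symm, ((hu.2 (i + 1)).mpr (Or.inr rfl)).symm⟩
    ⟨((hw.2 i).mpr (Or.inl rfl)).symm, ((hw.2 (i + 1)).mpr (Or.inr rfl)).symm⟩ huw

theorem DiamondFree.not_adj_of_mem_attachedToEdge_add_one [NeZero k] (hD : DiamondFree G)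
    (hC : IsInducedCycle G c) (hk : 3 ≤ k) (hu : u ∈ attachedToEdge G c i)
    (hw : w ∈ attachedToEdge G c (i + 1)) : ¬ G.Adj u w := fun huw => by
  have hwi : G.Adj w (c i) := hD.adj_of_mem_commonNeighbors ((hu.2 (i + 1)).mpr (Or.inr rfl))
    ⟨huw, ((hw.2 (i + 1)).mpr (Or.inl rfl)).symm⟩
    ⟨(hu.2 i).mpr (Or.inl rfl), (hC.adj_add_one (by omega) i).symm⟩ fun h => hw.1 ⟨i, h.symm⟩
  rcases (hw.2 i).mp hwi with h | h
  · exact Fin.add_one_ne_self_of_two_le (by omega) i h.symm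
  · exact Fin.add_two_ne_self_of_three_le hk i h.symm

theorem not_adj_of_mem_attachedTo (hcommon : G.Adj u w → ∃ m, G.Adj u (c m) ∧ G.Adj w (c m))
    (hij : i ≠ j) (hu : u ∈ attachedTo G c i) (hw : w ∈ attachedTo G c j) : ¬ G.Adj u w :=
  fun huw => by
    obtain ⟨m, hum, hwm⟩ := hcommon huw
    exact hij (((hu.2 m).mp hum).symm.trans ((hw.2 m).mp hwm))

theorem DiamondFree.not_adj_of_mem_attachedToEdge [NeZero k] (hD : DiamondFree G)
    (hC : IsInducedCycle G c) (hk : 3 ≤ k)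
    (hcommon : G.Adj u w → ∃ m, G.Adj u (c m) ∧ G.Adj w (c m)) (hij : i ≠ j)
    (hu : u ∈ attachedToEdge G c i) (hw : w ∈ attachedToEdge G c j) : ¬ G.Adj u w := fun huw => by
  obtain ⟨m, hum, hwm⟩ := hcommon huw
  rcases (hu.2 m).mp hum with hi | hi <;> rcases (hw.2 m).mp hwm with hj | hj
  · exact hij (hi.symm.trans hj)
  · obtain rfl : i = j + 1 := hi.symm.trans hj
    exact hD.not_adj_of_mem_attachedToEdge_add_one hC hk hw hu huw.symm
  · obtain rfl : j = i + 1 := hj.symm.trans hi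
    exact hD.not_adj_of_mem_attachedToEdge_add_one hC hk hu hw huw
  · exact hij (add_right_cancel (hi.symm.trans hj))

theorem DiamondFree.not_adj_of_mem_attachedTo_of_mem_attachedToEdge [NeZero k]
    (hD : DiamondFree G) (hC : IsInducedCycle G c) (hk : 2 ≤ k)
    (hcommon : G.Adj u w → ∃ m, G.Adj u (c m) ∧ G.Adj w (c m))
    (hu : u ∈ attachedTo G c i) (hw : w ∈ attachedToEdge G c j) : ¬ G.Adj u w := fun huw => by
  obtain ⟨m, hum, hwm⟩ := hcommon huw
  have hu_ne : ∀ m', u ≠ c m' := fun m' h => hu.1 ⟨m', h.symm⟩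
  have hi := (hu.2 m).mp hum
  rcases (hw.2 m).mp hwm with hj | hj <;> rw [hj] at hum hwm hi
  · have h := hD.adj_of_mem_commonNeighbors hwm ⟨huw.symm, hum.symm⟩
      ⟨(hw.2 (j + 1)).mpr (Or.inr rfl), hC.adj_add_one hk j⟩ (hu_ne _)
    exact Fin.add_one_ne_self_of_two_le hk j (((hu.2 _).mp h).trans hi.symm)
  · have h := hD.adj_of_mem_commonNeighbors hwm ⟨huw.symm, hum.symm⟩
      ⟨(hw.2 j).mpr (Or.inl rfl), (hC.adj_add_one hk j).symm⟩ (hu_ne _)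
    exact Fin.add_one_ne_self_of_two_le hk j (hi.trans ((hu.2 j).mp h).symm)

end Hole

section IntersectionModel

variable {V X : Type*} {G : SimpleGraph V} {k : ℕ} {c : Fin k → V} {A : V → Set X}

theorem exists_adj_adj_of_inter_nonempty (hA : ∀ v w, v ≠ w → (G.Adj v w ↔ (A v ∩ A w).Nonempty))
    (hcov : ⋃ m, A (c m) = univ) {u w : V} (hu : u ∉ range c) (hw : w ∉ range c)
    (huw : (A u ∩ A w).Nonempty) : ∃ m, G.Adj u (c m) ∧ G.Adj w (c m) := by
  obtain ⟨x, hxu, hxw⟩ := huw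
  obtain ⟨m, hxm⟩ := mem_iUnion.mp (hcov ▸ mem_univ x)
  exact ⟨m, (hA _ _ fun h => hu ⟨m, h.symm⟩).mpr ⟨x, hxu, hxm⟩,
    (hA _ _ fun h => hw ⟨m, h.symm⟩).mpr ⟨x, hxw, hxm⟩⟩

theorem exists_mem_attachedTo_or_mem_attachedToEdge [TopologicalSpace X] [NeZero k]
    (hD : DiamondFree G) (hC : IsInducedCycle G c) (hk : 4 ≤ k)
    (hA : ∀ v w, v ≠ w → (G.Adj v w ↔ (A v ∩ A w).Nonempty)) (hcov : ⋃ m, A (c m) = univ)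
    (hcl : ∀ m, IsClosed (A (c m))) {v : V} (hv : v ∉ range c) (hconn : IsPreconnected (A v))
    (hne : (A v).Nonempty) : ∃ i, v ∈ attachedTo G c i ∨ v ∈ attachedToEdge G c i := by
  have hN : ∀ m, G.Adj v (c m) → G.Adj v (c (m + 1)) → ¬ G.Adj v (c (m + 1 + 1)) :=
    hD.not_adj_of_adj_of_adj hC hk
  have hvA : ∀ m, G.Adj v (c m) ↔ (A v ∩ A (c m)).Nonempty := fun m =>
    hA _ _ fun h => hv ⟨m, h.symm⟩
  have hcons : ∀ i j, G.Adj v (c i) → G.Adj v (c j) → j = i ∨ j = i + 1 ∨ i = j + 1 := by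
    refine fun i j hi hj => (eq_or_consecutive_of_reflTransGen hN ?_ hi
      (hconn.reflTransGen_of_subset_iUnion hcl (hcov ▸ subset_univ _) ((hvA i).mp hi)
        ((hvA j).mp hj))).2
    rintro m m' ⟨x, hxv, hxm, hxm'⟩
    refine ⟨(hvA m').mpr ⟨x, hxv, hxm'⟩, or_iff_not_imp_left.mpr fun hmm' => ?_⟩
    exact (hC.adj_iff (by omega) m m').mp ((hA _ _ (hC.1.ne (Ne.symm hmm'))).mpr ⟨x, hxm, hxm'⟩)
  obtain ⟨i, hi, -⟩ := exists_adj_adj_of_inter_nonempty hA hcov hv hv (by rwa [inter_self])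
  rcases eq_singleton_or_eq_pair_of_consecutive hN hcons hi with ⟨i, h⟩ | ⟨i, h⟩
  exacts [⟨i, Or.inl ⟨hv, h⟩⟩, ⟨i, Or.inr ⟨hv, h⟩⟩]

end IntersectionModel

/-- in a diamond-free circular-arc graph `G` with a hole `C = v_1 … v_k`,
the vertices outside `C` can be partitioned into `2k` pairwise anticomplete sets
`U_1, …, U_k, S_1, …, S_k` where each `G[U_i]` is a disjoint union of cliques whose
vertices have `N_C(u) = {v_i}`, and each `G[S_i]` is a clique whose vertices have
`N_C(s) = {v_i, v_{i+1}}`. -/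
theorem diamondFree_CA_hole_structure {V : Type*} (G : SimpleGraph V)
    (hCA : IsCircularArcGraph G) (hD : DiamondFree G)
    (k : ℕ) (hk : 4 ≤ k) (c : Fin k → V) (hC : IsInducedCycle G c) :
    ∃ U S : Fin k → Set V,
      -- the sets partition `V(G) − C`
      (∀ v : V, (∃ i, v ∈ U i ∨ v ∈ S i) ↔ v ∉ Set.range c) ∧
      (∀ i j, i ≠ j → Disjoint (U i) (U j)) ∧
      (∀ i j, i ≠ j → Disjoint (S i) (S j)) ∧
      (∀ i j, Disjoint (U i) (S j)) ∧
      -- the sets are pairwise anticomplete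
      (∀ i j, i ≠ j → ∀ u ∈ U i, ∀ w ∈ U j, ¬ G.Adj u w) ∧
      (∀ i j, i ≠ j → ∀ u ∈ S i, ∀ w ∈ S j, ¬ G.Adj u w) ∧
      (∀ i j, ∀ u ∈ U i, ∀ w ∈ S j, ¬ G.Adj u w) ∧
      -- `G[U i]` is a disjoint union of cliques (adjacency on `U i` is transitive)
      (∀ i, ∀ u ∈ U i, ∀ v ∈ U i, ∀ w ∈ U i, G.Adj u v → G.Adj v w → u ≠ w → G.Adj u w) ∧
      (∀ i, ∀ u ∈ U i, ∀ j, G.Adj u (c j) ↔ j = i) ∧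
      -- `G[S i]` is a clique
      (∀ i, ∀ x ∈ S i, ∀ y ∈ S i, x ≠ y → G.Adj x y) ∧
      (∀ i, ∀ x ∈ S i, ∀ j, G.Adj x (c j) ↔ (j = i ∨ j = cycShift i 1)) := by
  have : NeZero k := ⟨by omega⟩
  obtain ⟨a, l, hl, harc⟩ := hCA
  have hcov : ⋃ m, circArc (a (c m)) (l (c m)) = univ := iUnion_circArc_eq_univ hk
    fun m m' hne => by rw [← harc _ _ (hC.1.ne hne), hC.adj_iff (by omega)]
  have hcommon {u w : V} (hu : u ∉ range c) (hw : w ∉ range c) (huw : G.Adj u w) :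
      ∃ m, G.Adj u (c m) ∧ G.Adj w (c m) :=
    exists_adj_adj_of_inter_nonempty harc hcov hu hw ((harc u w huw.ne).mp huw)
  refine ⟨attachedTo G c, attachedToEdge G c, fun v => ⟨?_, fun hv => ?_⟩,
    fun i j => disjoint_attachedTo, fun i j => disjoint_attachedToEdge (by omega),
    fun i j => disjoint_attachedTo_attachedToEdge (by omega),
    fun i j hij u hu w hw => not_adj_of_mem_attachedTo (hcommon hu.1 hw.1) hij hu hw,
    fun i j hij u hu w hw => hD.not_adj_of_mem_attachedToEdge hC (by omega) (hcommon hu.1 hw.1)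
      hij hu hw,
    fun i j u hu w hw => hD.not_adj_of_mem_attachedTo_of_mem_attachedToEdge hC (by omega)
      (hcommon hu.1 hw.1) hu hw,
    fun i u hu v hv w hw => hD.adj_of_mem_attachedTo hu hv hw, fun i u hu => hu.2,
    fun i x hx y hy => hD.adj_of_mem_attachedToEdge hC (by omega) hx hy, fun i x hx => hx.2⟩
  · rintro ⟨i, hv | hv⟩ <;> exact hv.1
  · exact exists_mem_attachedTo_or_mem_attachedToEdge hD hC hk harc hcov
      (fun m => isClosed_circArc _ _) hv (isPreconnected_circArc _ _)
      ⟨_, mem_circArc_self _ (hl v).le⟩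
end
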